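/- For all real t with 0 ≤ t ≤ 1, ∫_0^1 (arcsin(t·x) · arccos x)/x dx = χ₃(t) = ∑_{n=1}^∞ t^(2n-1)/(2n-1)^3. -/

import Mathlib

open Real intervalIntegral MeasureTheory Filter Topology

-- half-angle symmetry: ∫₀^{π/2} sin^m = (1/2) ∫₀^π sin^m
lemma sin_pow_half (m : ℕ) :
    ∫ θ in (0:ℝ)..(π/2), sin θ ^ m = (∫ θ in (0:ℝ)..π, sin θ ^ m) / 2 := by
  have h1 : ∫ θ in (0:ℝ)..(π/2), sin (π - θ) ^ m = ∫ θ in (π - π/2)..(π - 0), sin θ ^ m :=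
    intervalIntegral.integral_comp_sub_left (fun x => sin x ^ m) π
  have h2 : ∫ θ in (0:ℝ)..(π/2), sin (π - θ) ^ m = ∫ θ in (0:ℝ)..(π/2), sin θ ^ m := by
    congr 1; ext θ; rw [Real.sin_pi_sub]
  have h3 : (∫ θ in (0:ℝ)..π, sin θ ^ m)
      = (∫ θ in (0:ℝ)..(π/2), sin θ ^ m) + ∫ θ in (π/2)..π, sin θ ^ m := by
    rw [intervalIntegral.integral_add_adjacent_intervals] <;>
      exact (Real.continuous_sin.pow m).intervalIntegrable _ _
  have h4 : (∫ θ in (π/2)..π, sin θ ^ m) = ∫ θ in (0:ℝ)..(π/2), sin θ ^ m := by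
    rw [← h2, h1]; norm_num [sub_zero]
    congr 1; ring
  rw [h3, h4]; ring

lemma cos_eq_sin (m : ℕ) :
    ∫ θ in (0:ℝ)..(π/2), cos θ ^ m = ∫ θ in (0:ℝ)..(π/2), sin θ ^ m := by
  have h1 : ∫ θ in (0:ℝ)..(π/2), sin (π/2 - θ) ^ m = ∫ θ in (π/2 - π/2)..(π/2 - 0), sin θ ^ m :=
    intervalIntegral.integral_comp_sub_left (fun x => sin x ^ m) (π/2)
  have h2 : ∀ θ : ℝ, sin (π/2 - θ) = cos θ := fun θ => Real.sin_pi_div_two_sub θ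
  simp only [h2] at h1
  simpa using h1

lemma S_val (n : ℕ) : ∫ θ in (0:ℝ)..(π/2), sin θ ^ (2*n)
    = (π/2) * ∏ i ∈ Finset.range n, ((2*i+1:ℝ)/(2*i+2)) := by
  rw [sin_pow_half, integral_sin_pow_even]; ring

lemma C_val (n : ℕ) : ∫ θ in (0:ℝ)..(π/2), cos θ ^ (2*n+1)
    = ∏ i ∈ Finset.range n, ((2*i+2:ℝ)/(2*i+3)) := by
  rw [cos_eq_sin, sin_pow_half, integral_sin_pow_odd]; ring

lemma prod_telescope (n : ℕ) :
    (∏ i ∈ Finset.range n, ((2*i+1:ℝ)/(2*i+2))) * (∏ i ∈ Finset.range n, ((2*i+2:ℝ)/(2*i+3)))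
      = 1 / (2*n+1) := by
  induction n with
  | zero => norm_num
  | succ n ih =>
    rw [Finset.prod_range_succ, Finset.prod_range_succ]
    have h : ((2*(n:ℝ)+2)) ≠ 0 := by positivity
    field_simp at ih ⊢
    push_cast
    nlinarith [ih]

lemma arctan_integral {y : ℝ} (hy0 : 0 ≤ y) (hy1 : y < 1) :
    ∫ θ in (0:ℝ)..(π/2), 1 / (1 - y^2 * sin θ ^ 2)
      = (π/2) / Real.sqrt (1 - y^2) := by
  set c := Real.sqrt (1 - y^2) with hc
  have hy2 : 0 < 1 - y^2 := by nlinarith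
  have hcpos : 0 < c := Real.sqrt_pos.mpr hy2
  have hc2 : c^2 = 1 - y^2 := Real.sq_sqrt hy2.le
  set f : ℝ → ℝ := fun θ => 1 / (1 - y^2 * sin θ ^ 2) with hf
  have hden : ∀ θ : ℝ, 0 < 1 - y^2 * sin θ ^ 2 := by
    intro θ
    nlinarith [Real.sin_sq_le_one θ, sq_nonneg (y * sin θ), sq_nonneg y]
  have hfc : Continuous f := by
    apply Continuous.div continuous_const
    · continuity
    · intro θ; exact (hden θ).ne'
  -- FTC on [0, b] for b < π/2
  have key : ∀ b ∈ Set.Ico (0:ℝ) (π/2),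
      ∫ θ in (0:ℝ)..b, f θ = Real.arctan (c * Real.tan b) / c := by
    intro b hb
    have hderiv : ∀ θ ∈ Set.uIcc (0:ℝ) b,
        HasDerivAt (fun θ => Real.arctan (c * Real.tan θ) / c) (f θ) θ := by
      intro θ hθ
      rw [Set.uIcc_of_le hb.1] at hθ
      have hcosθ : 0 < Real.cos θ :=
        Real.cos_pos_of_mem_Ioo ⟨by linarith [pi_pos, hθ.1], lt_of_le_of_lt hθ.2 hb.2⟩
      have h1 : HasDerivAt Real.tan (1 / Real.cos θ ^ 2) θ := Real.hasDerivAt_tan hcosθ.ne'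
      have h2 : HasDerivAt (fun θ => c * Real.tan θ) (c * (1 / Real.cos θ ^ 2)) θ :=
        h1.const_mul c
      have h3 := (Real.hasDerivAt_arctan (c * Real.tan θ)).comp θ h2
      have h4 := h3.div_const c
      refine h4.congr_deriv ?_
      have hcos2 : Real.cos θ ^ 2 ≠ 0 := by positivity
      have htan : Real.tan θ = Real.sin θ / Real.cos θ := Real.tan_eq_sin_div_cos θ
      have hsc : Real.sin θ ^ 2 + Real.cos θ ^ 2 = 1 := Real.sin_sq_add_cos_sq θ
      have key2 : (1 + (c * Real.tan θ)^2) * Real.cos θ ^ 2 = 1 - y^2 * Real.sin θ ^ 2 := by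
        rw [htan]
        field_simp
        linear_combination Real.sin θ ^ 2 * hc2 + hsc
      have hpos1 : (0:ℝ) < 1 + (c * Real.tan θ)^2 := by positivity
      have h5 : 1 / (1 + (c * Real.tan θ)^2) * (c * (1 / Real.cos θ^2)) / c
          = 1/((1 + (c * Real.tan θ)^2) * Real.cos θ^2) := by
        field_simp
      rw [h5, key2]
    rw [intervalIntegral.integral_eq_sub_of_hasDerivAt hderiv
      (hfc.intervalIntegrable 0 b)]
    simp [Real.tan_zero, Real.arctan_zero]
  -- limits
  have hcont : ContinuousAt (fun b => ∫ θ in (0:ℝ)..b, f θ) (π/2) :=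
    (intervalIntegral.continuous_primitive (fun a b => hfc.intervalIntegrable a b) 0).continuousAt
  have hlim1 : Tendsto (fun b => ∫ θ in (0:ℝ)..b, f θ) (𝓝[<] (π/2))
      (𝓝 (∫ θ in (0:ℝ)..(π/2), f θ)) :=
    (hcont.tendsto).mono_left nhdsWithin_le_nhds
  have htanlim : Tendsto (fun b => Real.arctan (c * Real.tan b) / c) (𝓝[<] (π/2))
      (𝓝 ((π/2) / c)) := by
    have h1 : Tendsto Real.tan (𝓝[<] (π/2)) atTop := Real.tendsto_tan_pi_div_two
    have h2 : Tendsto (fun b => c * Real.tan b) (𝓝[<] (π/2)) atTop :=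
      (tendsto_const_mul_atTop_of_pos hcpos).mpr h1
    have h3 : Tendsto (fun b => Real.arctan (c * Real.tan b)) (𝓝[<] (π/2)) (𝓝 (π/2)) :=
      (Real.tendsto_arctan_atTop.mono_right nhdsWithin_le_nhds).comp h2
    exact h3.div_const c
  have heq : (fun b => ∫ θ in (0:ℝ)..b, f θ) =ᶠ[𝓝[<] (π/2)]
      (fun b => Real.arctan (c * Real.tan b) / c) := by
    filter_upwards [Ioo_mem_nhdsLT_of_mem (Set.mem_Ioc.mpr ⟨by positivity, le_refl _⟩)] with b hb
    exact key b ⟨hb.1.le, hb.2⟩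
  have := tendsto_nhds_unique (hlim1.congr' heq) htanlim
  simpa using this

noncomputable def S (n : ℕ) : ℝ := ∫ θ in (0:ℝ)..(π/2), sin θ ^ (2*n)

lemma S_nonneg (n : ℕ) : 0 ≤ S n := by
  rw [S, S_val]
  have : (0:ℝ) ≤ ∏ i ∈ Finset.range n, ((2*i+1:ℝ)/(2*i+2)) :=
    Finset.prod_nonneg fun i _ => by positivity
  positivity

lemma S_le (n : ℕ) : S n ≤ π/2 := by
  rw [S, S_val]
  have h1 : ∏ i ∈ Finset.range n, ((2*i+1:ℝ)/(2*i+2)) ≤ 1 :=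
    Finset.prod_le_one (fun i _ => by positivity)
      (fun i _ => by rw [div_le_one (by positivity)]; linarith)
  nlinarith [pi_pos]

lemma step1 {y : ℝ} (hy0 : 0 ≤ y) (hy1 : y < 1) :
    ∑' n : ℕ, (2/π) * S n * y^(2*n) = 1 / Real.sqrt (1 - y^2) := by
  have hy2 : y^2 < 1 := by nlinarith
  have hgeo : Summable fun n : ℕ => (y^2)^n :=
    summable_geometric_of_lt_one (by positivity) hy2
  -- interchange
  have hswap : ∑' n : ℕ, S n * y^(2*n)
      = ∫ θ in Set.Ioc (0:ℝ) (π/2), (1 / (1 - y^2 * sin θ ^ 2)) := by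
    have hpi2 : (0:ℝ) ≤ π/2 := by positivity
    have hF : ∀ n : ℕ, Integrable (fun θ : ℝ => y^(2*n) * sin θ ^ (2*n))
        (volume.restrict (Set.Ioc (0:ℝ) (π/2))) := by
      intro n
      exact (continuous_const.mul (Real.continuous_sin.pow _)).integrableOn_Ioc.integrable
    have hsum : Summable fun n : ℕ =>
        ∫ θ in Set.Ioc (0:ℝ) (π/2), ‖y^(2*n) * sin θ ^ (2*n)‖ := by
      apply Summable.of_nonneg_of_le (fun n => integral_nonneg fun θ => norm_nonneg _)
        (fun n => ?_) (hgeo.mul_right (π/2))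
      have : ∀ θ : ℝ, ‖y^(2*n) * sin θ ^ (2*n)‖ = y^(2*n) * sin θ ^ (2*n) := by
        intro θ
        rw [Real.norm_eq_abs, abs_of_nonneg]
        have : (0:ℝ) ≤ sin θ ^ (2*n) := by rw [pow_mul]; positivity
        positivity
      simp_rw [this]
      rw [MeasureTheory.integral_const_mul, ← intervalIntegral.integral_of_le hpi2]
      calc y^(2*n) * S n ≤ y^(2*n) * (π/2) := by
            have := S_le n; have := S_nonneg n
            have : (0:ℝ) ≤ y^(2*n) := by positivity
            nlinarith [S_le n]
        _ = (y^2)^n * (π/2) := by rw [pow_mul]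
    have key := MeasureTheory.integral_tsum_of_summable_integral_norm hF hsum
    have hpt : ∀ θ ∈ Set.Ioc (0:ℝ) (π/2),
        ∑' n : ℕ, y^(2*n) * sin θ ^ (2*n) = 1 / (1 - y^2 * sin θ ^ 2) := by
      intro θ _
      have hr : y^2 * sin θ ^ 2 < 1 := by nlinarith [Real.sin_sq_le_one θ, sq_nonneg (y * sin θ)]
      have hr0 : 0 ≤ y^2 * sin θ ^ 2 := by positivity
      have := tsum_geometric_of_lt_one hr0 hr
      calc ∑' n : ℕ, y^(2*n) * sin θ ^ (2*n) = ∑' n : ℕ, (y^2 * sin θ ^ 2)^n := by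
            congr 1; ext n; rw [pow_mul, pow_mul, mul_pow]
        _ = (1 - y^2 * sin θ ^ 2)⁻¹ := this
        _ = 1 / (1 - y^2 * sin θ ^ 2) := (one_div _).symm
    calc ∑' n : ℕ, S n * y^(2*n)
        = ∑' n : ℕ, ∫ θ in Set.Ioc (0:ℝ) (π/2), y^(2*n) * sin θ ^ (2*n) := by
          congr 1; ext n
          rw [MeasureTheory.integral_const_mul, ← intervalIntegral.integral_of_le hpi2]
          rw [← S]; ring
      _ = ∫ θ in Set.Ioc (0:ℝ) (π/2), ∑' n : ℕ, y^(2*n) * sin θ ^ (2*n) := key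
      _ = ∫ θ in Set.Ioc (0:ℝ) (π/2), (1 / (1 - y^2 * sin θ ^ 2)) := by
          apply MeasureTheory.setIntegral_congr_fun measurableSet_Ioc
          intro θ hθ; exact hpt θ hθ
  have harctan := arctan_integral hy0 hy1
  rw [intervalIntegral.integral_of_le (by positivity : (0:ℝ) ≤ π/2)] at harctan
  have hc : Real.sqrt (1 - y^2) > 0 := Real.sqrt_pos.mpr (by nlinarith)
  have : ∑' n : ℕ, (2/π) * S n * y^(2*n) = (2/π) * ∑' n : ℕ, S n * y^(2*n) := by
    rw [← tsum_mul_left]; congr 1; ext n; ring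
  rw [this, hswap, harctan]
  field_simp

lemma b_nonneg (n : ℕ) : 0 ≤ (2/π) * S n := by
  have := S_nonneg n; have := pi_pos; positivity

lemma b_le_one (n : ℕ) : (2/π) * S n ≤ 1 := by
  have h := S_le n; have hp := pi_pos
  rw [div_mul_eq_mul_div, div_le_one hp]
  linarith

lemma arcsin_series {y : ℝ} (hy0 : 0 ≤ y) (hy1 : y < 1) :
    Real.arcsin y = ∑' n : ℕ, (2/π) * S n * y^(2*n+1) / (2*n+1) := by
  have hy2 : y^2 < 1 := by nlinarith
  -- arcsin y = ∫₀^y 1/√(1-s²)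
  have hFTC : Real.arcsin y = ∫ s in (0:ℝ)..y, 1 / Real.sqrt (1 - s^2) := by
    have hderiv : ∀ s ∈ Set.uIcc (0:ℝ) y,
        HasDerivAt Real.arcsin (1 / Real.sqrt (1 - s^2)) s := by
      intro s hs
      rw [Set.uIcc_of_le hy0] at hs
      exact Real.hasDerivAt_arcsin (by linarith [hs.1]) (by linarith [hs.2, hy1])
    have hcont : ContinuousOn (fun s : ℝ => 1 / Real.sqrt (1 - s^2)) (Set.uIcc 0 y) := by
      apply ContinuousOn.div continuousOn_const
      · exact (Real.continuous_sqrt.comp (by continuity)).continuousOn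
      · intro s hs
        rw [Set.uIcc_of_le hy0] at hs
        have : (0:ℝ) < 1 - s^2 := by nlinarith [hs.1, hs.2]
        positivity
    have := intervalIntegral.integral_eq_sub_of_hasDerivAt hderiv
      (hcont.intervalIntegrable)
    rw [this, Real.arcsin_zero, sub_zero]
  rw [hFTC, intervalIntegral.integral_of_le hy0]
  -- replace integrand by series
  have hpt : ∀ s ∈ Set.Ioc (0:ℝ) y, (1:ℝ) / Real.sqrt (1 - s^2)
      = ∑' n : ℕ, (2/π) * S n * s^(2*n) := by
    intro s hs
    exact (step1 hs.1.le (lt_of_le_of_lt hs.2 hy1)).symm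
  rw [MeasureTheory.setIntegral_congr_fun measurableSet_Ioc hpt]
  -- interchange
  have hF : ∀ n : ℕ, Integrable (fun s : ℝ => (2/π) * S n * s^(2*n))
      (volume.restrict (Set.Ioc (0:ℝ) y)) :=
    fun n => (continuous_const.mul (continuous_pow _)).integrableOn_Ioc.integrable
  have hval : ∀ n : ℕ, ∫ s in Set.Ioc (0:ℝ) y, (2/π) * S n * s^(2*n)
      = (2/π) * S n * y^(2*n+1) / (2*n+1) := by
    intro n
    rw [MeasureTheory.integral_const_mul, ← intervalIntegral.integral_of_le hy0,
      integral_pow]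
    push_cast
    ring_nf
  have hsum : Summable fun n : ℕ =>
      ∫ s in Set.Ioc (0:ℝ) y, ‖(2/π) * S n * s^(2*n)‖ := by
    have hgeo : Summable fun n : ℕ => (y^2)^n * y :=
      (summable_geometric_of_lt_one (by positivity) hy2).mul_right y
    apply Summable.of_nonneg_of_le (fun n => integral_nonneg fun s => norm_nonneg _)
      (fun n => ?_) hgeo
    have hn : ∀ s ∈ Set.Ioc (0:ℝ) y, ‖(2/π) * S n * s^(2*n)‖ = (2/π) * S n * s^(2*n) := by
      intro s hs
      rw [Real.norm_eq_abs, abs_of_nonneg (mul_nonneg (b_nonneg n) (pow_nonneg hs.1.le _))]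
    rw [MeasureTheory.setIntegral_congr_fun measurableSet_Ioc hn, hval n]
    have h1 : (2/π) * S n * y^(2*n+1) / (2*n+1) ≤ y^(2*n+1) := by
      have hb0 := b_nonneg n
      have hb1 := b_le_one n
      have hy' : (0:ℝ) ≤ y^(2*n+1) := by positivity
      have h2 : (2/π) * S n * y^(2*n+1) ≤ y^(2*n+1) := by nlinarith
      have h3 : (1:ℝ) ≤ (2*n+1 : ℝ) := by push_cast; linarith [show (0:ℝ) ≤ (n:ℝ) from Nat.cast_nonneg n]
      calc (2/π) * S n * y^(2*n+1) / (2*n+1) ≤ (2/π) * S n * y^(2*n+1) / 1 := by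
            apply div_le_div_of_nonneg_left ?_ ?_ h3 <;> first | nlinarith | norm_num
        _ = (2/π) * S n * y^(2*n+1) := by ring
        _ ≤ y^(2*n+1) := h2
    calc _ ≤ y^(2*n+1) := h1
      _ = (y^2)^n * y := by rw [pow_succ, pow_mul]
  rw [← MeasureTheory.integral_tsum_of_summable_integral_norm hF hsum]
  congr 1; ext n; exact hval n

lemma J_val (n : ℕ) : ∫ x in (0:ℝ)..1, x^(2*n) * Real.arccos x
    = (∫ θ in (0:ℝ)..(π/2), cos θ ^ (2*n+1)) / (2*n+1) := by
  have hg : Continuous (fun x : ℝ => x^(2*n) * Real.arccos x) :=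
    (continuous_pow _).mul Real.continuous_arccos
  -- substitution x = cos θ
  have hsub : ∫ x in (0:ℝ)..1, x^(2*n) * Real.arccos x
      = ∫ θ in (0:ℝ)..(π/2), sin θ * (cos θ ^(2*n) * θ) := by
    have hderiv : ∀ θ ∈ Set.uIcc (0:ℝ) (π/2),
        HasDerivAt Real.cos (-Real.sin θ) θ := fun θ _ => Real.hasDerivAt_cos θ
    have hcont : ContinuousOn (fun θ : ℝ => -Real.sin θ) (Set.uIcc 0 (π/2)) :=
      (Real.continuous_sin.neg).continuousOn
    have h := intervalIntegral.integral_comp_smul_deriv hderiv hcont hg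
    -- h : ∫ θ in 0..π/2, (-sin θ) • g (cos θ) = ∫ x in cos 0..cos (π/2), g x
    rw [Real.cos_zero, Real.cos_pi_div_two] at h
    have h2 : ∫ x in (1:ℝ)..0, x^(2*n) * Real.arccos x
        = -∫ x in (0:ℝ)..1, x^(2*n) * Real.arccos x := intervalIntegral.integral_symm 0 1
    rw [h2] at h
    have h3 : Set.EqOn
        (fun θ : ℝ => -Real.sin θ • ((fun x : ℝ => x^(2*n) * Real.arccos x) ∘ Real.cos) θ)
        (fun θ : ℝ => -(Real.sin θ * (Real.cos θ ^(2*n) * θ)))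
        (Set.uIcc (0:ℝ) (π/2)) := by
      intro θ hθ
      rw [Set.uIcc_of_le (by positivity : (0:ℝ) ≤ π/2)] at hθ
      simp only [Function.comp_apply, smul_eq_mul]
      rw [Real.arccos_cos hθ.1 (by linarith [hθ.2, pi_pos])]
      ring
    rw [intervalIntegral.integral_congr h3, intervalIntegral.integral_neg] at h
    linarith [h]
  rw [hsub]
  -- integration by parts
  have hu : ∀ θ ∈ Set.uIcc (0:ℝ) (π/2), HasDerivAt (fun θ : ℝ => θ) (1:ℝ) θ :=
    fun θ _ => hasDerivAt_id θ
  have hv : ∀ θ ∈ Set.uIcc (0:ℝ) (π/2),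
      HasDerivAt (fun θ => -(Real.cos θ ^(2*n+1)) / (2*n+1))
        (Real.sin θ * Real.cos θ ^(2*n)) θ := by
    intro θ _
    have h1 : HasDerivAt (fun θ => Real.cos θ ^(2*n+1))
        ((2*n+1 : ℕ) * Real.cos θ ^(2*n) * (-Real.sin θ)) θ :=
      (Real.hasDerivAt_cos θ).pow (2*n+1)
    have h2 := (h1.neg).div_const ((2*n+1 : ℝ))
    refine h2.congr_deriv ?_
    have : ((2*n+1 : ℕ):ℝ) = (2*n+1 : ℝ) := by push_cast; ring
    field_simp [this]
    push_cast
    ring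
  have hIBP := intervalIntegral.integral_mul_deriv_eq_deriv_mul hu hv
    ((continuous_const).intervalIntegrable 0 (π/2))
    ((Real.continuous_sin.mul (Real.continuous_cos.pow _)).intervalIntegrable 0 (π/2))
  -- hIBP : ∫ θ * (sin θ * cos^{2n} θ) = ... - ∫ 1 * v
  have hend : (π/2) * (-(Real.cos (π/2) ^(2*n+1)) / (2*n+1))
      - 0 * (-(Real.cos 0 ^(2*n+1)) / (2*n+1)) = 0 := by
    rw [Real.cos_pi_div_two]
    simp [zero_pow]
  rw [hend] at hIBP
  have heq1 : ∫ θ in (0:ℝ)..(π/2), sin θ * (cos θ ^(2*n) * θ)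
      = ∫ θ in (0:ℝ)..(π/2), θ * (Real.sin θ * Real.cos θ ^(2*n)) := by
    congr 1; ext θ; ring
  rw [heq1, hIBP]
  have : ∀ θ : ℝ, (1:ℝ) * (-(Real.cos θ ^(2*n+1)) / (2*n+1))
      = -(Real.cos θ ^(2*n+1) / (2*n+1)) := fun θ => by ring
  simp_rw [this]
  rw [intervalIntegral.integral_neg]
  rw [intervalIntegral.integral_div]
  push_cast
  ring

noncomputable def chiF (t : ℝ) (n : ℕ) (x : ℝ) : ℝ :=
  (2/π) * S n * t^(2*n+1) * (x^(2*n) * Real.arccos x) / (2*n+1)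

lemma chiF_cont (t : ℝ) (n : ℕ) : Continuous (chiF t n) := by
  unfold chiF
  exact (continuous_const.mul ((continuous_pow _).mul Real.continuous_arccos)).div_const _

lemma term_val (t : ℝ) (n : ℕ) :
    ∫ x in Set.Ioc (0:ℝ) 1, chiF t n x = t^(2*n+1) / (2*(n:ℝ)+1)^3 := by
  have h1 : ∀ x : ℝ, chiF t n x
      = ((2/π) * S n * t^(2*n+1) / (2*(n:ℝ)+1)) * (x^(2*n) * Real.arccos x) := fun x => by
    unfold chiF; ring
  simp_rw [h1]
  rw [MeasureTheory.integral_const_mul, ← intervalIntegral.integral_of_le (by norm_num : (0:ℝ) ≤ 1),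
    J_val, C_val, S, S_val]
  have key := prod_telescope n
  generalize hP : (∏ i ∈ Finset.range n, ((2*i+1:ℝ)/(2*i+2))) = P at key ⊢
  generalize hQ : (∏ i ∈ Finset.range n, ((2*i+2:ℝ)/(2*i+3))) = Q at key ⊢
  have hc : (2*(n:ℝ)+1) ≠ 0 := by positivity
  have hπ : (π:ℝ) ≠ 0 := pi_ne_zero
  have key' : P * Q * (2*(n:ℝ)+1) = 1 := by rw [key]; field_simp
  field_simp
  linear_combination t^(2*n+1) * key'

set_option maxHeartbeats 1000000 in
theorem chi3_integral (t : ℝ) (ht0 : 0 ≤ t) (ht1 : t ≤ 1) :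
    ∫ x in (0:ℝ)..1, Real.arcsin (t * x) * Real.arccos x / x =
      ∑' n : ℕ, t ^ (2 * (n + 1) - 1) / ((2 * (n + 1) - 1 : ℕ) : ℝ) ^ 3 := by
  have hRHS : ∑' n : ℕ, t ^ (2 * (n + 1) - 1) / ((2 * (n + 1) - 1 : ℕ) : ℝ) ^ 3
      = ∑' n : ℕ, t ^ (2*n+1) / (2*(n:ℝ)+1) ^ 3 := by
    congr 1; ext n
    have h : 2 * (n + 1) - 1 = 2*n+1 := by omega
    rw [h]; push_cast; ring_nf
  rw [hRHS, intervalIntegral.integral_of_le (by norm_num : (0:ℝ) ≤ 1)]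
  -- pointwise identity a.e.
  have hae : ∀ᵐ x ∂(volume.restrict (Set.Ioc (0:ℝ) 1)),
      Real.arcsin (t * x) * Real.arccos x / x = ∑' n : ℕ, chiF t n x := by
    have h1 : ∀ᵐ x : ℝ ∂volume, x ≠ (1:ℝ) := by
      rw [MeasureTheory.ae_iff]
      simp only [ne_eq, not_not, Set.setOf_eq_eq_singleton]
      exact measure_singleton 1
    filter_upwards [MeasureTheory.ae_restrict_mem measurableSet_Ioc,
      MeasureTheory.ae_restrict_of_ae h1] with x hx hx1
    have hx0 : 0 < x := hx.1
    have hxlt : x < 1 := lt_of_le_of_ne hx.2 hx1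
    have htx0 : 0 ≤ t * x := mul_nonneg ht0 hx0.le
    have htx1 : t * x < 1 := by nlinarith
    rw [arcsin_series htx0 htx1]
    rw [← tsum_mul_right, ← tsum_div_const]
    congr 1; ext n
    unfold chiF
    have h3 : (t*x)^(2*n+1) = t^(2*n+1) * (x^(2*n) * x) := by
      rw [mul_pow, pow_succ]; ring
    rw [h3]
    field_simp
  rw [MeasureTheory.integral_congr_ae hae]
  -- interchange
  have hFint : ∀ n : ℕ, Integrable (chiF t n) (volume.restrict (Set.Ioc (0:ℝ) 1)) :=
    fun n => (chiF_cont t n).integrableOn_Ioc.integrable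
  have hFnonneg : ∀ n : ℕ, ∀ x ∈ Set.Ioc (0:ℝ) 1, 0 ≤ chiF t n x := by
    intro n x hx
    unfold chiF
    have h1 := b_nonneg n
    have h2 : (0:ℝ) ≤ t^(2*n+1) := by positivity
    have h3 : (0:ℝ) ≤ x^(2*n) := pow_nonneg hx.1.le _
    have h4 : (0:ℝ) ≤ Real.arccos x := Real.arccos_nonneg x
    have h5 : (0:ℝ) < 2*(n:ℝ)+1 := by positivity
    positivity
  have hsum : Summable fun n : ℕ => ∫ x in Set.Ioc (0:ℝ) 1, ‖chiF t n x‖ := by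
    have h0 : Summable (fun n : ℕ => 1 / ((n:ℝ)) ^ 2) :=
      Real.summable_one_div_nat_pow.mpr one_lt_two
    have h1 : Summable (fun n : ℕ => 1 / (((n+1 : ℕ)):ℝ) ^ 2) :=
      (summable_nat_add_iff (f := fun n : ℕ => 1 / ((n:ℝ))^2) 1).mpr h0
    have hb : Summable fun n : ℕ => 1 / (2*(n:ℝ)+1)^2 := by
      apply Summable.of_nonneg_of_le (fun n => by positivity) (fun n => ?_) h1
      apply div_le_div_of_nonneg_left one_pos.le (by positivity)
      push_cast
      nlinarith [Nat.cast_nonneg (α := ℝ) n]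
    apply Summable.of_nonneg_of_le (fun n => integral_nonneg fun x => norm_nonneg _)
      (fun n => ?_) hb
    have heq : ∀ x ∈ Set.Ioc (0:ℝ) 1, ‖chiF t n x‖ = chiF t n x := fun x hx =>
      by rw [Real.norm_eq_abs, abs_of_nonneg (hFnonneg n x hx)]
    rw [MeasureTheory.setIntegral_congr_fun measurableSet_Ioc heq, term_val]
    have ht' : t^(2*n+1) ≤ 1 := pow_le_one₀ ht0 ht1
    have h5 : (0:ℝ) < 2*(n:ℝ)+1 := by positivity
    calc t^(2*n+1) / (2*(n:ℝ)+1)^3 ≤ 1 / (2*(n:ℝ)+1)^3 :=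
          div_le_div_of_nonneg_right ht' (by positivity)
      _ ≤ 1 / (2*(n:ℝ)+1)^2 := by
          apply div_le_div_of_nonneg_left one_pos.le (by positivity)
          nlinarith
  rw [← MeasureTheory.integral_tsum_of_summable_integral_norm hFint hsum]
  congr 1; ext n
  rw [term_val]
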